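/- If φ is proper convex and w⁺ minimizes u ↦ φ(u) + (1/β) D(u, ŵ), then for all w ∈ E: φ(w⁺) + (1/β) D(w⁺, ŵ) + (1/β) D(w, w⁺) ≤ φ(w) + (1/β) D(w, ŵ). -/

import Mathlib

/-!
Optimality of `w⁺` together with convexity of `φ` says that `-(1/β) (∇H w⁺ - ∇H ŵ)` is a
subgradient of `φ` at `w⁺`: compare `w⁺` with the points `w⁺ + t (w - w⁺)`, bound `φ` on that
segment by its chord and let `t → 0⁺`. The three-point identity
`D(w, ŵ) - D(w⁺, ŵ) - D(w, w⁺) = ⟪∇H w⁺ - ∇H ŵ, w - w⁺⟫` turns this subgradient inequality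
into the claim.
-/

open Set
open scoped RealInnerProductSpace

section Optimality

variable {E : Type*} [NormedAddCommGroup E] [NormedSpace ℝ E]

theorem ConvexOn.le_add_fderiv_of_isMinOn_add {s : Set E} {f g : E → ℝ} {g' : StrongDual ℝ E}
    {x y : E} (hf : ConvexOn ℝ s f) (hg : HasFDerivAt g g' x) (hmin : IsMinOn (f + g) s x)
    (hx : x ∈ s) (hy : y ∈ s) : f x ≤ f y + g' (y - x) := by
  set v := y - x
  -- `f` is below its chord on the segment, so `h` has a minimum at `0` on `[0, 1]`.
  set h : ℝ → ℝ := fun t => g (x + t • v) + t * (f y - f x)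
  have hline : HasDerivAt (fun t : ℝ => x + t • v) v 0 := by
    simpa using ((hasDerivAt_id (0 : ℝ)).smul_const v).const_add x
  have hh : HasDerivAt h (g' v + (f y - f x)) 0 := by
    have hg0 : HasFDerivAt g g' (x + (0 : ℝ) • v) := by simpa using hg
    exact (hg0.comp_hasDerivAt 0 hline).add (hasDerivAt_mul_const (f y - f x))
  have hmin_h : IsMinOn h (Icc 0 1) 0 := by
    intro t ⟨ht0, ht1⟩
    show h 0 ≤ h t
    have hpt : x + t • v = (1 - t) • x + t • y := by simp only [v]; module
    have hmem : x + t • v ∈ s := hpt ▸ hf.1 hx hy (by linarith) ht0 (by ring)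
    have hchord : f (x + t • v) ≤ (1 - t) * f x + t * f y := by
      simpa [hpt, smul_eq_mul] using hf.2 hx hy (by linarith : (0 : ℝ) ≤ 1 - t) ht0 (by ring)
    have hopt : f x + g x ≤ f (x + t • v) + g (x + t • v) := hmin hmem
    simp only [h, zero_smul, add_zero, zero_mul]
    linarith
  have hdir : 0 ≤ 1 * (g' v + (f y - f x)) := by
    simpa only [ContinuousLinearMap.toSpanSingleton_apply, smul_eq_mul]
      using hmin_h.localize.hasFDerivWithinAt_nonneg hh.hasFDerivAt.hasFDerivWithinAt
        (mem_posTangentConeAt_of_segment_subset (by rw [zero_add, segment_eq_Icc zero_le_one]))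
  linarith

end Optimality

theorem bregman_three_point {E : Type*} [NormedAddCommGroup E] [InnerProductSpace ℝ E]
    {H : E → ℝ} {G : E → E} {D : E → E → ℝ} (hD : ∀ u v, D u v = H u - H v - ⟪G v, u - v⟫)
    (u v w : E) : D w u - D v u - D w v = ⟪G v - G u, w - v⟫ := by
  have hsplit : w - u = (w - v) + (v - u) := by abel
  simp only [hD, inner_sub_left, hsplit, inner_add_right]
  ring

theorem stmt_5_general {E : Type*} [NormedAddCommGroup E] [InnerProductSpace ℝ E]
    [FiniteDimensional ℝ E] (H : E → ℝ) (hH : Differentiable ℝ H)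
    (D : E → E → ℝ)
    (hD : ∀ u v, D u v = H u - H v - (inner ℝ (gradient H v) (u - v) : ℝ))
    (φ : E → ℝ) (hφ : ConvexOn ℝ Set.univ φ)
    (β : ℝ) (what wplus : E)
    (hmin : ∀ u : E, φ wplus + (1 / β) * D wplus what ≤ φ u + (1 / β) * D u what) :
    ∀ w : E, φ wplus + (1 / β) * D wplus what + (1 / β) * D w wplus
      ≤ φ w + (1 / β) * D w what := by
  intro w
  have hderiv : HasFDerivAt (fun u => (1 / β) * D u what)
      ((1 / β) • (InnerProductSpace.toDual ℝ E (gradient H wplus - gradient H what))) wplus := by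
    simp only [hD, inner_sub_right, map_sub]
    exact ((((hH wplus).hasGradientAt.hasFDerivAt.sub_const _).sub
      ((InnerProductSpace.toDual ℝ E (gradient H what)).hasFDerivAt.sub_const _)).const_mul _)
  have hsub := hφ.le_add_fderiv_of_isMinOn_add hderiv (isMinOn_univ_iff.2 hmin)
    (mem_univ wplus) (mem_univ w)
  simp only [FunLike.coe_smul, Pi.smul_apply, InnerProductSpace.toDual_apply_apply,
    smul_eq_mul] at hsub
  linear_combination hsub - (1 / β) * bregman_three_point hD what wplus w

theorem stmt_5 {E : Type*} [NormedAddCommGroup E] [InnerProductSpace ℝ E]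
    [FiniteDimensional ℝ E] (H : E → ℝ) (hH : Differentiable ℝ H)
    (hHconv : ConvexOn ℝ Set.univ H)
    (D : E → E → ℝ)
    (hD : ∀ u v, D u v = H u - H v - (inner ℝ (gradient H v) (u - v) : ℝ))
    (φ : E → ℝ) (hφ : ConvexOn ℝ Set.univ φ)
    (β : ℝ) (hβ : 0 < β) (what wplus : E)
    (hmin : ∀ u : E, φ wplus + (1 / β) * D wplus what ≤ φ u + (1 / β) * D u what) :
    ∀ w : E, φ wplus + (1 / β) * D wplus what + (1 / β) * D w wplus
      ≤ φ w + (1 / β) * D w what :=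
  stmt_5_general H hH D hD φ hφ β what wplus hmin
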